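/- There exists a constant μ ∈ ℂ such that λ(r, −r) = μ for every r ∈ ℤ^N \ {0}. -/
import Mathlib


/-- The "bar" involution on `ℤ^{2m}`:
`bar r = (r_{m+1}, …, r_{2m}, -r_1, …, -r_m)`. -/
def bar (m : ℕ) (r : Fin (2*m) → ℤ) : Fin (2*m) → ℤ := fun i =>
  if h : (i : ℕ) < m then r ⟨(i : ℕ) + m, by omega⟩
  else - r ⟨(i : ℕ) - m, by have := i.isLt; omega⟩

/-- Equation (9.3): for all nonzero `l, r, s ∈ ℤ^{2m}`,
`⟨l̄,s⟩·λ(r,s+l) + ⟨l̄,r⟩·λ(s,r+l) − ⟨l̄,r+s⟩·λ(r,s) = 0`. -/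
def Eq93 (m : ℕ) (lam : (Fin (2*m) → ℤ) → (Fin (2*m) → ℤ) → ℂ) : Prop :=
  ∀ l r s : Fin (2*m) → ℤ, l ≠ 0 → r ≠ 0 → s ≠ 0 →
    ((∑ i, bar m l i * s i : ℤ) : ℂ) * lam r (s + l)
      + ((∑ i, bar m l i * r i : ℤ) : ℂ) * lam s (r + l)
      - ((∑ i, bar m l i * (r + s) i : ℤ) : ℂ) * lam r s = 0

def w (m : ℕ) (l r : Fin (2*m) → ℤ) : ℤ := ∑ i, bar m l i * r i

lemma sum_split (m : ℕ) (f : Fin (2*m) → ℤ) :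
    ∑ i, f i = (∑ i : Fin m, f ⟨(i:ℕ), by omega⟩) + ∑ i : Fin m, f ⟨m + (i:ℕ), by omega⟩ := by
  have h : 2*m = m + m := by ring
  rw [Fintype.sum_equiv (finCongr h) f (fun i : Fin (m+m) => f (finCongr h.symm i)) (fun i => rfl)]
  rw [Fin.sum_univ_add]; rfl

lemma bar_lo (m : ℕ) (l : Fin (2*m) → ℤ) (i : ℕ) (h : i < m) (h2 : i < 2*m) :
    bar m l ⟨i, h2⟩ = l ⟨m + i, by omega⟩ := by
  simp only [bar, dif_pos h]
  exact congrArg l (Fin.ext (show i + m = m + i by omega))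

lemma bar_hi (m : ℕ) (l : Fin (2*m) → ℤ) (i : ℕ) (h : i < m) (h2 : m + i < 2*m) :
    bar m l ⟨m + i, h2⟩ = - l ⟨i, by omega⟩ := by
  have hn : ¬ (m + i < m) := by omega
  simp only [bar, dif_neg hn]
  exact congrArg (fun x => - l x) (Fin.ext (show m + i - m = i by omega))

lemma bar_add (m : ℕ) (a b : Fin (2*m) → ℤ) (i : Fin (2*m)) :
    bar m (a + b) i = bar m a i + bar m b i := by
  unfold bar; split <;> simp <;> ring

lemma w_add_left (m : ℕ) (a b r : Fin (2*m) → ℤ) :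
    w m (a + b) r = w m a r + w m b r := by
  unfold w
  rw [← Finset.sum_add_distrib]
  exact Finset.sum_congr rfl fun i _ => by rw [bar_add]; ring

lemma w_zero_left (m : ℕ) (r : Fin (2*m) → ℤ) : w m 0 r = 0 := by
  unfold w
  apply Finset.sum_eq_zero
  intro i _
  unfold bar; split <;> simp

lemma w_self (m : ℕ) (l : Fin (2*m) → ℤ) : w m l l = 0 := by
  unfold w
  rw [sum_split m (fun i => bar m l i * l i), ← Finset.sum_add_distrib]
  apply Finset.sum_eq_zero
  intro i _
  rw [bar_lo m l i i.isLt (by omega), bar_hi m l i i.isLt (by omega)]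
  ring

lemma w_neg_right (m : ℕ) (l r : Fin (2*m) → ℤ) : w m l (-r) = - w m l r := by
  unfold w
  rw [← Finset.sum_neg_distrib]
  exact Finset.sum_congr rfl fun i _ => by simp

lemma w_add_right (m : ℕ) (l r s : Fin (2*m) → ℤ) : w m l (r + s) = w m l r + w m l s := by
  unfold w
  rw [← Finset.sum_add_distrib]
  exact Finset.sum_congr rfl fun i _ => by simp; ring

lemma w_sub_left (m : ℕ) (a b r : Fin (2*m) → ℤ) :
    w m (a - b) r = w m a r - w m b r := by
  have h := w_add_left m (a - b) b r
  rw [sub_add_cancel] at h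
  omega

lemma key (m : ℕ) (lam : (Fin (2*m) → ℤ) → (Fin (2*m) → ℤ) → ℂ)
    (hsymm : ∀ r s, lam r s = lam s r) (h93 : Eq93 m lam)
    (l r : Fin (2*m) → ℤ) (hr : r ≠ 0) (hrl : r + l ≠ 0) (hw : w m l r ≠ 0) :
    lam (r + l) (-(r + l)) = lam r (-r) := by
  have hl : l ≠ 0 := by
    rintro rfl
    exact hw (w_zero_left m r)
  set s : Fin (2*m) → ℤ := -(r + l) with hs
  have hs0 : s ≠ 0 := neg_ne_zero.mpr hrl
  have h := h93 l r s hl hr hs0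
  have hsl : s + l = -r := by rw [hs]; ring
  have hrs : r + s = -l := by rw [hs]; ring
  rw [hsl, hrs] at h
  have e1 : (∑ i, bar m l i * s i) = - w m l r := by
    rw [show (∑ i, bar m l i * s i) = w m l s from rfl, hs, w_neg_right, w_add_right,
      w_self]
    ring
  have e2 : (∑ i, bar m l i * r i) = w m l r := rfl
  have e3 : (∑ i, bar m l i * (-l) i) = 0 := by
    rw [show (∑ i, bar m l i * (-l) i) = w m l (-l) from rfl, w_neg_right, w_self, neg_zero]
  rw [e1, e2, e3] at h
  push_cast at h
  have h' : (w m l r : ℂ) * (lam s (r + l) - lam r (-r)) = 0 := by ring_nf; ring_nf at h; linear_combination h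
  have hw' : (w m l r : ℂ) ≠ 0 := Int.cast_ne_zero.mpr hw
  have := (mul_eq_zero.mp h').resolve_left hw'
  have hfin : lam s (r + l) = lam r (-r) := sub_eq_zero.mp this
  rw [← hfin, hsymm, hs]

lemma step (m : ℕ) (lam : (Fin (2*m) → ℤ) → (Fin (2*m) → ℤ) → ℂ)
    (hsymm : ∀ r s, lam r s = lam s r) (h93 : Eq93 m lam)
    (r s : Fin (2*m) → ℤ) (hr : r ≠ 0) (hs : s ≠ 0) (hw : w m s r ≠ 0) :
    lam s (-s) = lam r (-r) := by
  have hl : r + (s - r) = s := by ring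
  have hw' : w m (s - r) r ≠ 0 := by
    rw [w_sub_left, w_self, sub_zero]; exact hw
  have := key m lam hsymm h93 (s - r) r hr (by rw [hl]; exact hs) hw'
  rwa [hl] at this

lemma w_single_hi (m : ℕ) (k : ℕ) (hk : k < m) (r : Fin (2*m) → ℤ) :
    w m (Pi.single (⟨m + k, by omega⟩ : Fin (2*m)) 1) r = r ⟨k, by omega⟩ := by
  set j : Fin (2*m) := ⟨m + k, by omega⟩ with hj
  unfold w
  rw [sum_split]
  have hhi : ∀ i : Fin m, bar m (Pi.single j 1) ⟨m + (i:ℕ), by omega⟩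
      * r ⟨m + (i:ℕ), by omega⟩ = 0 := by
    intro i
    rw [bar_hi m _ i i.isLt]
    rw [Pi.single_eq_of_ne (fun hcon => by
      have h' : (i:ℕ) = m + k := congrArg Fin.val hcon
      have := i.isLt; omega)]
    ring
  have hlo : ∀ i : Fin m, bar m (Pi.single j 1) ⟨(i:ℕ), by omega⟩ * r ⟨(i:ℕ), by omega⟩
      = (if i = (⟨k, hk⟩ : Fin m) then r ⟨(i:ℕ), by omega⟩ else 0) := by
    intro i
    rw [bar_lo m _ i i.isLt]
    by_cases hik : i = (⟨k, hk⟩ : Fin m)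
    · rw [if_pos hik]
      have hik' : (i:ℕ) = k := congrArg Fin.val hik
      have he : (⟨m + (i:ℕ), by omega⟩ : Fin (2*m)) = j := Fin.ext (show m + (i:ℕ) = m + k by omega)
      rw [he, Pi.single_eq_same, one_mul]
    · rw [if_neg hik, Pi.single_eq_of_ne, zero_mul]
      intro hcon
      have h' : m + (i:ℕ) = m + k := congrArg Fin.val hcon
      exact hik (Fin.ext (show (i:ℕ) = k by omega))
  rw [Finset.sum_congr rfl (fun i _ => hlo i), Finset.sum_congr rfl (fun i _ => hhi i),
    Finset.sum_const_zero, add_zero, Finset.sum_ite_eq' Finset.univ (⟨k, hk⟩ : Fin m)]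
  simp

lemma w_single_lo (m : ℕ) (k : ℕ) (hk : k < m) (r : Fin (2*m) → ℤ) :
    w m (Pi.single (⟨k, by omega⟩ : Fin (2*m)) 1) r = - r ⟨m + k, by omega⟩ := by
  set j : Fin (2*m) := ⟨k, by omega⟩ with hj
  unfold w
  rw [sum_split]
  have hlo : ∀ i : Fin m, bar m (Pi.single j 1) ⟨(i:ℕ), by omega⟩
      * r ⟨(i:ℕ), by omega⟩ = 0 := by
    intro i
    rw [bar_lo m _ i i.isLt]
    rw [Pi.single_eq_of_ne (fun hcon => by
      have h' : m + (i:ℕ) = k := congrArg Fin.val hcon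
      omega), zero_mul]
  have hhi : ∀ i : Fin m, bar m (Pi.single j 1) ⟨m + (i:ℕ), by omega⟩ * r ⟨m + (i:ℕ), by omega⟩
      = (if i = (⟨k, hk⟩ : Fin m) then - r ⟨m + (i:ℕ), by omega⟩ else 0) := by
    intro i
    rw [bar_hi m _ i i.isLt]
    by_cases hik : i = (⟨k, hk⟩ : Fin m)
    · rw [if_pos hik]
      have hik' : (i:ℕ) = k := congrArg Fin.val hik
      have he : (⟨(i:ℕ), by omega⟩ : Fin (2*m)) = j := Fin.ext (show (i:ℕ) = k by omega)
      rw [he, Pi.single_eq_same]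
      ring
    · rw [if_neg hik, Pi.single_eq_of_ne, neg_zero, zero_mul]
      intro hcon
      have h' : (i:ℕ) = k := congrArg Fin.val hcon
      exact hik (Fin.ext (show (i:ℕ) = k by omega))
  rw [Finset.sum_congr rfl (fun i _ => hlo i), Finset.sum_congr rfl (fun i _ => hhi i),
    Finset.sum_const_zero, zero_add, Finset.sum_ite_eq' Finset.univ (⟨k, hk⟩ : Fin m)]
  simp

lemma exists_single (m : ℕ) (r : Fin (2*m) → ℤ) (hr : r ≠ 0) :
    ∃ j : Fin (2*m), w m (Pi.single j 1) r ≠ 0 := by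
  obtain ⟨k, hk⟩ := Function.ne_iff.mp hr
  simp only [Pi.zero_apply] at hk
  by_cases h : (k : ℕ) < m
  · refine ⟨⟨m + (k:ℕ), by omega⟩, ?_⟩
    rw [w_single_hi m k h]
    have : (⟨(k:ℕ), by omega⟩ : Fin (2*m)) = k := Fin.ext rfl
    rwa [this]
  · refine ⟨⟨(k:ℕ) - m, by omega⟩, ?_⟩
    have hlt : (k:ℕ) - m < m := by have := k.isLt; omega
    have he : (⟨(k:ℕ) - m, by omega⟩ : Fin (2*m)) = ⟨(k:ℕ) - m, by omega⟩ := rfl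
    rw [show (⟨(k:ℕ) - m, by omega⟩ : Fin (2*m)) = (⟨(k:ℕ) - m, by omega⟩ : Fin (2*m)) from rfl]
    rw [w_single_lo m ((k:ℕ) - m) hlt]
    have : (⟨m + ((k:ℕ) - m), by omega⟩ : Fin (2*m)) = k := Fin.ext (by have := k.isLt; simp; omega)
    rw [this]
    exact neg_ne_zero.mpr hk

lemma single_ne_zero' (m : ℕ) (j : Fin (2*m)) : (Pi.single j 1 : Fin (2*m) → ℤ) ≠ 0 := by
  intro h
  have := congrFun h j
  simp at this


/-- There is a constant `μ ∈ ℂ` with `λ(r,−r) = μ` for every nonzero `r ∈ ℤ^{2m}`. -/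
theorem stmt16 (m : ℕ) (hm : 1 ≤ m)
    (lam : (Fin (2*m) → ℤ) → (Fin (2*m) → ℤ) → ℂ)
    (hsymm : ∀ r s, lam r s = lam s r)
    (h93 : Eq93 m lam) :
    ∃ μ : ℂ, ∀ r : Fin (2*m) → ℤ, r ≠ 0 → lam r (-r) = μ := by
  set r₀ : Fin (2*m) → ℤ := Pi.single (⟨0, by omega⟩ : Fin (2*m)) 1 with hr₀
  have hr₀0 : r₀ ≠ 0 := single_ne_zero' m _
  refine ⟨lam r₀ (-r₀), fun r hr => ?_⟩
  obtain ⟨i, hi⟩ := exists_single m r hr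
  obtain ⟨j, hj⟩ := exists_single m r₀ hr₀0
  set ei : Fin (2*m) → ℤ := Pi.single i 1 with hei
  set ej : Fin (2*m) → ℤ := Pi.single j 1 with hej
  have hei0 : ei ≠ 0 := single_ne_zero' m i
  have hej0 : ej ≠ 0 := single_ne_zero' m j
  by_cases h1 : w m ei r₀ ≠ 0
  · rw [← step m lam hsymm h93 r ei hr hei0 hi,
      step m lam hsymm h93 r₀ ei hr₀0 hei0 h1]
  · by_cases h2 : w m ej r ≠ 0
    · rw [← step m lam hsymm h93 r ej hr hej0 h2,
        step m lam hsymm h93 r₀ ej hr₀0 hej0 hj]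
    · push_neg at h1 h2
      set t : Fin (2*m) → ℤ := ei + ej with ht
      have hwt : w m t r ≠ 0 := by
        rw [ht, w_add_left, h2, add_zero]; exact hi
      have hwt₀ : w m t r₀ ≠ 0 := by
        rw [ht, w_add_left, h1, zero_add]; exact hj
      have ht0 : t ≠ 0 := by
        rintro h
        rw [h, w_zero_left] at hwt
        exact hwt rfl
      rw [← step m lam hsymm h93 r t hr ht0 hwt,
        step m lam hsymm h93 r₀ t hr₀0 ht0 hwt₀]
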